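/- arXiv:1807.05550 — 5 statements merged into one kernel-verified Lean document; each statement's English description precedes it below -/
import Mathlib

section
/- Let (X_k) be a real-valued stochastic process adapted to a filtration, with X_0 = 0, such that for some η > 0, E(X_{k+1} | F_k) ≤ X_k − η for all k, and |X_{k+1} − X_k| ≤ M almost surely for some M > 0. Then there exists q ∈ (0,1), depending only on M and η, such that for all ℓ > 0, the probability that X_k ever reaches level ℓ or above is at most q^ℓ. -/
/-!
With `c = min (1 / M) (η / M ^ 2)`, the bound `exp y ≤ 1 + y + y ^ 2` for `|y| ≤ 1` shows that the
conditional expectation of `exp (c (X (k+1) - X k))` given `ℱ k` is at most `1 + c η - c η = 1`,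
so `exp (c X k)` is a nonnegative supermartingale started at `1`. Optional stopping at the first
time it exceeds `exp (c ℓ)` gives Doob's maximal inequality for it, hence
`P (∃ k, ℓ ≤ X k) ≤ exp (-c ℓ) = (exp (-c)) ^ ℓ`.
-/

open MeasureTheory ProbabilityTheory

theorem Real.exp_le_one_add_add_sq {y : ℝ} (hy : |y| ≤ 1) : Real.exp y ≤ 1 + y + y ^ 2 := by
  linarith [(abs_le.1 (Real.abs_exp_sub_one_sub_id_le hy)).2]

namespace MeasureTheory

variable {Ω : Type*} {m m0 : MeasurableSpace Ω} {μ : Measure Ω}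

section Maximal

variable {𝒢 : Filtration ℕ m0} {f : ℕ → Ω → ℝ}

theorem Supermartingale.expected_stoppedValue_le [SigmaFiniteFiltration μ 𝒢]
    (hf : Supermartingale f 𝒢 μ) {τ : Ω → WithTop ℕ} (hτ : IsStoppingTime 𝒢 τ) {N : ℕ}
    (hbdd : ∀ ω, τ ω ≤ N) : μ[stoppedValue f τ] ≤ μ[f 0] := by
  have h := hf.neg.expected_stoppedValue_mono (isStoppingTime_const 𝒢 0) hτ
    (fun _ => bot_le) hbdd
  change ∫ ω, -f 0 ω ∂μ ≤ ∫ ω, -stoppedValue f τ ω ∂μ at h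
  rwa [integral_neg, integral_neg, neg_le_neg_iff] at h

theorem Supermartingale.mul_measureReal_exists_le_le [IsFiniteMeasure μ]
    (hf : Supermartingale f 𝒢 μ) (hnonneg : 0 ≤ f) (ε : ℝ) (n : ℕ) :
    ε * μ.real {ω | ∃ k ≤ n, ε ≤ f k ω} ≤ μ[f 0] := by
  set τ : Ω → WithTop ℕ := fun ω => (hittingBtwn f (Set.Ici ε) 0 n ω : ℕ)
  have hτ : IsStoppingTime 𝒢 τ :=
    hf.stronglyAdapted.adapted.isStoppingTime_hittingBtwn measurableSet_Ici
  have hτn : ∀ ω, τ ω ≤ n := fun ω => WithTop.coe_le_coe.2 (hittingBtwn_le ω)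
  have hmeas : MeasurableSet {ω | ∃ k ≤ n, ε ≤ f k ω} := by
    simp only [Set.ofPred_exists, Set.ofPred_and]
    exact .iUnion fun k => (MeasurableSet.const _).inter <|
      measurableSet_le measurable_const ((hf.stronglyMeasurable k).measurable.le (𝒢.le k))
  have hint := integrable_stoppedValue ℕ hτ hf.integrable hτn
  calc ε * μ.real {ω | ∃ k ≤ n, ε ≤ f k ω}
      ≤ ∫ ω in {ω | ∃ k ≤ n, ε ≤ f k ω}, stoppedValue f τ ω ∂μ :=
        setIntegral_ge_of_const_le_real hmeas (measure_ne_top _ _)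
          (fun _ ⟨k, hk, hfk⟩ => stoppedValue_hittingBtwn_mem ⟨k, ⟨k.zero_le, hk⟩, hfk⟩)
          hint.integrableOn
    _ ≤ μ[stoppedValue f τ] := setIntegral_le_integral hint (.of_forall fun _ => hnonneg _ _)
    _ ≤ μ[f 0] := hf.expected_stoppedValue_le hτ hτn

theorem Supermartingale.measure_exists_le_le [IsFiniteMeasure μ]
    (hf : Supermartingale f 𝒢 μ) (hnonneg : 0 ≤ f) {ε : ℝ} (hε : 0 < ε) :
    μ {ω | ∃ k, ε ≤ f k ω} ≤ ENNReal.ofReal (μ[f 0] / ε) := by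
  have hmono : Monotone fun n => {ω | ∃ k ≤ n, ε ≤ f k ω} :=
    fun _ _ hab _ ⟨k, hk, hfk⟩ => ⟨k, hk.trans hab, hfk⟩
  have hunion : {ω | ∃ k, ε ≤ f k ω} = ⋃ n, {ω | ∃ k ≤ n, ε ≤ f k ω} := by
    ext ω
    simpa using ⟨fun ⟨k, hk⟩ => ⟨k, k, le_rfl, hk⟩, fun ⟨_, k, _, hk⟩ => ⟨k, hk⟩⟩
  rw [hunion, hmono.directed_le.measure_iUnion]
  refine iSup_le fun n => ?_
  rw [← ENNReal.ofReal_toReal (measure_ne_top μ _), ← measureReal_def]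
  exact ENNReal.ofReal_le_ofReal <|
    (le_div_iff₀' hε).2 (hf.mul_measureReal_exists_le_le hnonneg ε n)

end Maximal

theorem integrable_exp_mul_of_abs_le [IsFiniteMeasure μ] {δ : Ω → ℝ} {M c : ℝ}
    (hδ : AEStronglyMeasurable δ μ) (hδM : ∀ᵐ ω ∂μ, |δ ω| ≤ M) (hc : 0 ≤ c) :
    Integrable (fun ω => Real.exp (c * δ ω)) μ := by
  refine (integrable_const (Real.exp (c * M))).mono'
    (Real.continuous_exp.comp_aestronglyMeasurable (hδ.const_mul c)) ?_
  filter_upwards [hδM] with ω hω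
  rw [Real.norm_of_nonneg (Real.exp_pos _).le, Real.exp_le_exp]
  exact mul_le_mul_of_nonneg_left ((le_abs_self _).trans hω) hc

theorem condExp_exp_mul_le_one [IsFiniteMeasure μ] (hm : m ≤ m0) {δ : Ω → ℝ} {M η c : ℝ}
    (hδ : Integrable δ μ) (hδM : ∀ᵐ ω ∂μ, |δ ω| ≤ M) (hdrift : μ[δ|m] ≤ᵐ[μ] fun _ => -η)
    (hc : 0 ≤ c) (hcM : c * M ≤ 1) (hcη : c * M ^ 2 ≤ η) :
    μ[fun ω => Real.exp (c * δ ω)|m] ≤ᵐ[μ] 1 := by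
  set W : Ω → ℝ := fun ω => (1 + c * η) + c * δ ω
  have hW : Integrable W μ := (integrable_const _).add (hδ.const_mul c)
  have hexp_le : (fun ω => Real.exp (c * δ ω)) ≤ᵐ[μ] W := by
    filter_upwards [hδM] with ω hω
    have hcδ : |c * δ ω| ≤ c * M := by
      rw [abs_mul, abs_of_nonneg hc]; exact mul_le_mul_of_nonneg_left hω hc
    have hsq : (c * δ ω) ^ 2 ≤ c * η := by
      calc (c * δ ω) ^ 2 ≤ (c * M) ^ 2 := sq_le_sq' (abs_le.1 hcδ).1 (abs_le.1 hcδ).2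
        _ = c * (c * M ^ 2) := by ring
        _ ≤ c * η := mul_le_mul_of_nonneg_left hcη hc
    have := Real.exp_le_one_add_add_sq (hcδ.trans hcM)
    simp only [W]; linarith
  have hexp_int := integrable_exp_mul_of_abs_le hδ.aestronglyMeasurable hδM hc
  have hcondW : μ[W|m] =ᵐ[μ] fun ω => (1 + c * η) + c * μ[δ|m] ω := by
    have hW_eq : W = (fun _ => 1 + c * η) + c • δ := rfl
    rw [hW_eq]
    filter_upwards [condExp_add (m := m) (integrable_const (1 + c * η)) (hδ.smul c),
      condExp_smul (m := m) (μ := μ) c δ] with ω h1 h2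
    rw [h1, Pi.add_apply, condExp_const hm, h2]
    rfl
  filter_upwards [condExp_mono hexp_int hW hexp_le, hcondW, hdrift] with ω h1 h2 h3
  have := mul_le_mul_of_nonneg_left h3 hc
  simp only [Pi.one_apply]
  linarith

theorem integrable_exp_mul_of_abs_sub_le {X : ℕ → Ω → ℝ} {M c : ℝ} (hX : ∀ k, Measurable (X k))
    (h0 : Integrable (fun ω => Real.exp (c * X 0 ω)) μ)
    (hbdd : ∀ k, ∀ᵐ ω ∂μ, |X (k + 1) ω - X k ω| ≤ M) (hc : 0 ≤ c) (k : ℕ) :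
    Integrable (fun ω => Real.exp (c * X k ω)) μ := by
  induction k with
  | zero => exact h0
  | succ k ih =>
    refine (ih.mul_const (Real.exp (c * M))).mono'
      ((hX (k + 1)).const_mul c).exp.aestronglyMeasurable ?_
    filter_upwards [hbdd k] with ω hω
    rw [Real.norm_of_nonneg (Real.exp_pos _).le, ← Real.exp_add, Real.exp_le_exp]
    nlinarith [le_abs_self (X (k + 1) ω - X k ω)]

theorem supermartingale_exp_mul [IsFiniteMeasure μ] {ℱ : Filtration ℕ m0} {X : ℕ → Ω → ℝ}
    {M η c : ℝ} (hX : Adapted ℱ X) (hint : ∀ k, Integrable (X k) μ)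
    (h0 : Integrable (fun ω => Real.exp (c * X 0 ω)) μ)
    (hdrift : ∀ k, μ[X (k + 1)|ℱ k] ≤ᵐ[μ] fun ω => X k ω - η)
    (hbdd : ∀ k, ∀ᵐ ω ∂μ, |X (k + 1) ω - X k ω| ≤ M)
    (hc : 0 ≤ c) (hcM : c * M ≤ 1) (hcη : c * M ^ 2 ≤ η) :
    Supermartingale (fun k ω => Real.exp (c * X k ω)) ℱ μ := by
  set Y : ℕ → Ω → ℝ := fun k ω => Real.exp (c * X k ω)
  have hYsm : ∀ k, StronglyMeasurable[ℱ k] (Y k) :=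
    fun k => ((hX k).const_mul c).exp.stronglyMeasurable
  have hYint : ∀ k, Integrable (Y k) μ :=
    integrable_exp_mul_of_abs_sub_le (fun k => (hX k).le (ℱ.le k)) h0 hbdd hc
  refine supermartingale_nat hYsm hYint fun k => ?_
  set δ : Ω → ℝ := X (k + 1) - X k
  have hstep : Y (k + 1) = Y k * fun ω => Real.exp (c * δ ω) := by
    funext ω
    simp only [Y, δ, Pi.mul_apply, Pi.sub_apply, ← Real.exp_add]
    ring_nf
  have hδdrift : μ[δ|ℱ k] ≤ᵐ[μ] fun _ => -η := by
    filter_upwards [condExp_sub (m := ℱ k) (hint (k + 1)) (hint k), hdrift k] with ω h1 h2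
    rw [h1, Pi.sub_apply, condExp_of_stronglyMeasurable (ℱ.le k) (hX k).stronglyMeasurable
      (hint k)]
    linarith
  have hexp_int : Integrable (fun ω => Real.exp (c * δ ω)) μ :=
    integrable_exp_mul_of_abs_le ((hint (k + 1)).sub (hint k)).aestronglyMeasurable (hbdd k) hc
  filter_upwards [condExp_mul_of_stronglyMeasurable_left (hYsm k) (hstep ▸ hYint (k + 1))
      hexp_int,
    condExp_exp_mul_le_one (ℱ.le k) ((hint (k + 1)).sub (hint k)) (hbdd k) hδdrift hc hcM hcη]
    with ω h1 h2
  rw [hstep, h1, Pi.mul_apply]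
  exact mul_le_of_le_one_right (Real.exp_pos _).le h2

end MeasureTheory

theorem ruin_bound (η M : ℝ) (hη : 0 < η) (hM : 0 < M) :
    ∃ q ∈ Set.Ioo (0:ℝ) 1,
      ∀ (Ω : Type) (_ : MeasurableSpace Ω) (P : Measure Ω)
        (_ : IsProbabilityMeasure P) (ℱ : Filtration ℕ ‹MeasurableSpace Ω›)
        (X : ℕ → Ω → ℝ),
        Adapted ℱ X →
        (∀ k, Integrable (X k) P) →
        (∀ ω, X 0 ω = 0) →
        (∀ k, (P[X (k + 1) | ℱ k]) ≤ᵐ[P] fun ω => X k ω - η) →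
        (∀ k, ∀ᵐ ω ∂P, |X (k + 1) ω - X k ω| ≤ M) →
        ∀ ℓ : ℝ, 0 < ℓ →
          P {ω | ∃ k, X k ω ≥ ℓ} ≤ ENNReal.ofReal (q ^ ℓ) := by
  set c := min (1 / M) (η / M ^ 2)
  have hc : 0 < c := lt_min (by positivity) (by positivity)
  have hcM : c * M ≤ 1 := (le_div_iff₀ hM).1 (min_le_left _ _) |>.trans_eq (by ring)
  have hcη : c * M ^ 2 ≤ η := (le_div_iff₀ (by positivity)).1 (min_le_right _ _)
  refine ⟨Real.exp (-c), ⟨Real.exp_pos _, Real.exp_lt_one_iff.2 (neg_lt_zero.2 hc)⟩, ?_⟩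
  intro Ω _ P _ ℱ X hX hint hX0 hdrift hbdd ℓ hℓ
  have hY0 : (fun ω => Real.exp (c * X 0 ω)) = fun _ => 1 := by simp [hX0]
  have hsuper := supermartingale_exp_mul hX hint (hY0 ▸ integrable_const 1) hdrift hbdd
    hc.le hcM hcη
  have hevent : {ω | ∃ k, X k ω ≥ ℓ} = {ω | ∃ k, Real.exp (c * ℓ) ≤ Real.exp (c * X k ω)} := by
    simp only [Real.exp_le_exp, mul_le_mul_iff_right₀ hc, ge_iff_le]
  calc P {ω | ∃ k, X k ω ≥ ℓ}
      ≤ ENNReal.ofReal (P[fun ω => Real.exp (c * X 0 ω)] / Real.exp (c * ℓ)) :=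
        hevent ▸ hsuper.measure_exists_le_le (fun _ _ => (Real.exp_pos _).le) (Real.exp_pos _)
    _ = ENNReal.ofReal (Real.exp (-c) ^ ℓ) := by
        rw [hY0, integral_const, probReal_univ, smul_eq_mul, mul_one, one_div,
          ← Real.exp_neg, ← Real.exp_mul, neg_mul]
end

section
/- Let μ = Σ_{ℓ≥0} (1−p)p^ℓ δ_{1−2^{−ℓ}} for p ∈ (0,1), and let X, Y be i.i.d. with law μ. Then for every atom a = 1−2^{−ℓ}, P((X+Y)/2 ≥ a) = P(X ≥ a)·P(Y ≥ a). -/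
open MeasureTheory ProbabilityTheory

private lemma pow_half_le_iff {i ℓ : ℕ} : (2:ℝ)⁻¹ ^ i ≤ (2:ℝ)⁻¹ ^ ℓ ↔ ℓ ≤ i := by
  rw [inv_pow, inv_pow, inv_le_inv₀ (pow_pos two_pos _) (pow_pos two_pos _),
    pow_le_pow_iff_right₀ one_lt_two]

private lemma key_arith (ℓ i j : ℕ) :
    ((1 - (2:ℝ)⁻¹ ^ i) + (1 - (2:ℝ)⁻¹ ^ j)) / 2 ≥ 1 - (2:ℝ)⁻¹ ^ ℓ ↔
    ((1:ℝ) - (2:ℝ)⁻¹ ^ i ≥ 1 - (2:ℝ)⁻¹ ^ ℓ ∧ (1:ℝ) - (2:ℝ)⁻¹ ^ j ≥ 1 - (2:ℝ)⁻¹ ^ ℓ) := by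
  have hmean : ((1 - (2:ℝ)⁻¹ ^ i) + (1 - (2:ℝ)⁻¹ ^ j)) / 2 ≥ 1 - (2:ℝ)⁻¹ ^ ℓ ↔
      (2:ℝ)⁻¹ ^ i + (2:ℝ)⁻¹ ^ j ≤ 2 * (2:ℝ)⁻¹ ^ ℓ := by constructor <;> intro h <;> linarith
  have h1 : (1:ℝ) - (2:ℝ)⁻¹ ^ i ≥ 1 - (2:ℝ)⁻¹ ^ ℓ ↔ ℓ ≤ i := by
    rw [ge_iff_le, sub_le_sub_iff_left]; exact pow_half_le_iff
  have h2 : (1:ℝ) - (2:ℝ)⁻¹ ^ j ≥ 1 - (2:ℝ)⁻¹ ^ ℓ ↔ ℓ ≤ j := by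
    rw [ge_iff_le, sub_le_sub_iff_left]; exact pow_half_le_iff
  rw [hmean, h1, h2]
  have hpos : ∀ n : ℕ, (0:ℝ) < (2:ℝ)⁻¹ ^ n := fun n => pow_pos (by norm_num) n
  have hforce : ∀ k : ℕ, (2:ℝ)⁻¹ ^ k + (2:ℝ)⁻¹ ^ k ≤ 2 * (2:ℝ)⁻¹ ^ k := fun k => by ring_nf; rfl
  constructor
  · intro h
    have key : ∀ m n : ℕ, (2:ℝ)⁻¹ ^ m + (2:ℝ)⁻¹ ^ n ≤ 2 * (2:ℝ)⁻¹ ^ ℓ → ℓ ≤ m := by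
      intro m n hmn
      by_contra hc
      push_neg at hc
      have hm1 : m + 1 ≤ ℓ := hc
      have : (2:ℝ)⁻¹ ^ ℓ ≤ (2:ℝ)⁻¹ ^ (m+1) := pow_half_le_iff.mpr hm1
      have h2m : 2 * (2:ℝ)⁻¹ ^ (m+1) = (2:ℝ)⁻¹ ^ m := by
        rw [pow_succ]; ring
      have := hpos n
      nlinarith
    exact ⟨key i j h, key j i (by linarith)⟩
  · rintro ⟨hi, hj⟩
    have : (2:ℝ)⁻¹ ^ i ≤ (2:ℝ)⁻¹ ^ ℓ := pow_half_le_iff.mpr hi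
    have : (2:ℝ)⁻¹ ^ j ≤ (2:ℝ)⁻¹ ^ ℓ := pow_half_le_iff.mpr hj
    linarith

theorem atomic_example_sum_event
    (p : ℝ) (hp : p ∈ Set.Ioo (0:ℝ) 1)
    {Ω : Type*} [MeasurableSpace Ω] (P : Measure Ω) [IsProbabilityMeasure P]
    (X Y : Ω → ℝ) (hX : Measurable X) (hY : Measurable Y)
    (hXY : IndepFun X Y P)
    (μ : Measure ℝ)
    (hμ : μ = Measure.sum (fun ℓ : ℕ =>
      (ENNReal.ofReal ((1 - p) * p ^ ℓ)) • Measure.dirac (1 - (2:ℝ)⁻¹ ^ ℓ)))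
    (hXlaw : Measure.map X P = μ) (hYlaw : Measure.map Y P = μ) :
    ∀ ℓ : ℕ,
      P {ω | (X ω + Y ω) / 2 ≥ 1 - (2:ℝ)⁻¹ ^ ℓ}
        = P {ω | X ω ≥ 1 - (2:ℝ)⁻¹ ^ ℓ} * P {ω | Y ω ≥ 1 - (2:ℝ)⁻¹ ^ ℓ} := by
  intro ℓ
  set S : Set ℝ := Set.range (fun i : ℕ => 1 - (2:ℝ)⁻¹ ^ i) with hSdef
  have hS : MeasurableSet S := (Set.countable_range _).measurableSet
  have hμS : μ Sᶜ = 0 := by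
    rw [hμ, Measure.sum_apply _ hS.compl]
    have : ∀ i : ℕ, ((ENNReal.ofReal ((1 - p) * p ^ i)) •
        Measure.dirac (1 - (2:ℝ)⁻¹ ^ i)) Sᶜ = 0 := by
      intro i
      rw [Measure.smul_apply, Measure.dirac_apply' _ hS.compl,
        Set.indicator_of_notMem (Set.notMem_compl_iff.mpr (Set.mem_range_self i)), smul_zero]
    simp only [this, tsum_zero]
  have hXS : ∀ᵐ ω ∂P, X ω ∈ S := by
    rw [ae_iff]
    have : {ω | ¬ X ω ∈ S} = X ⁻¹' Sᶜ := rfl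
    rw [this, ← Measure.map_apply hX hS.compl, hXlaw]
    exact hμS
  have hYS : ∀ᵐ ω ∂P, Y ω ∈ S := by
    rw [ae_iff]
    have : {ω | ¬ Y ω ∈ S} = Y ⁻¹' Sᶜ := rfl
    rw [this, ← Measure.map_apply hY hS.compl, hYlaw]
    exact hμS
  set a : ℝ := 1 - (2:ℝ)⁻¹ ^ ℓ with ha
  have hset : {ω | (X ω + Y ω) / 2 ≥ a} =ᵐ[P] ((X ⁻¹' Set.Ici a ∩ Y ⁻¹' Set.Ici a : Set Ω)) := by
    rw [Filter.eventuallyEq_set]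
    filter_upwards [hXS, hYS] with ω hx hy
    obtain ⟨i, hi⟩ := hx
    obtain ⟨j, hj⟩ := hy
    simp only [Set.mem_setOf_eq, Set.mem_inter_iff, Set.mem_preimage, Set.mem_Ici]
    rw [← hi, ← hj, ha]
    constructor
    · intro h
      exact ⟨(key_arith ℓ i j).mp h |>.1, (key_arith ℓ i j).mp h |>.2⟩
    · intro ⟨h1, h2⟩
      exact (key_arith ℓ i j).mpr ⟨h1, h2⟩
  calc P {ω | (X ω + Y ω) / 2 ≥ a} = P (X ⁻¹' Set.Ici a ∩ Y ⁻¹' Set.Ici a) :=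
        measure_congr hset
    _ = P (X ⁻¹' Set.Ici a) * P (Y ⁻¹' Set.Ici a) :=
        hXY.measure_inter_preimage_eq_mul _ _ measurableSet_Ici measurableSet_Ici
    _ = P {ω | X ω ≥ a} * P {ω | Y ω ≥ a} := rfl
end

section
/- With μ and a as above and r < 1 − p², the drift ρ(a) := P(X>a, Y>a | X+Y ≥ 2a) − (1−r) satisfies ρ(a) = p² − 1 + r < 0, while the left-limit drift ρ⁺(a) := P(X≥a, Y≥a | X+Y ≥ 2a) − (1−r) equals r > 0. -/
open MeasureTheory ProbabilityTheory

lemma tsum_tail_geom (p : ℝ) (hp0 : 0 < p) (hp1 : p < 1) (m : ℕ) :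
    ∑' k : ℕ, (if m ≤ k then ENNReal.ofReal ((1 - p) * p ^ k) else 0)
      = ENNReal.ofReal (p ^ m) := by
  have h1p : (0:ℝ) ≤ 1 - p := by linarith
  have hsum : Summable (fun k : ℕ => (1 - p) * p ^ k) :=
    (summable_geometric_of_lt_one hp0.le hp1).mul_left _
  set g : ℕ → ℝ := fun k => if m ≤ k then (1 - p) * p ^ k else 0 with hg_def
  have hnn : ∀ k : ℕ, 0 ≤ g k := by
    intro k; simp only [hg_def]; split
    · exact mul_nonneg h1p (pow_nonneg hp0.le k)
    · exact le_rfl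
  have hg : Summable g := by
    apply Summable.of_nonneg_of_le hnn _ hsum
    intro k; simp only [hg_def]; split
    · exact le_rfl
    · exact mul_nonneg h1p (pow_nonneg hp0.le k)
  have h1 : (fun k : ℕ => if m ≤ k then ENNReal.ofReal ((1 - p) * p ^ k) else 0)
      = fun k => ENNReal.ofReal (g k) := by
    funext k; simp only [hg_def]; split <;> simp
  rw [h1, ← ENNReal.ofReal_tsum_of_nonneg hnn hg]
  congr 1
  have h2 := Summable.sum_add_tsum_nat_add m hg
  have h3 : ∑ i ∈ Finset.range m, g i = 0 := by
    apply Finset.sum_eq_zero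
    intro i hi
    rw [Finset.mem_range] at hi
    simp only [hg_def, if_neg (by omega : ¬ m ≤ i)]
  have h4 : ∑' i : ℕ, g (i + m) = p ^ m := by
    have he : (fun i : ℕ => g (i + m)) = fun i => ((1 - p) * p ^ m) * p ^ i := by
      funext i
      simp only [hg_def, if_pos (Nat.le_add_left m i), pow_add]
      ring
    rw [he, tsum_mul_left, tsum_geometric_of_lt_one hp0.le hp1]
    have : (1:ℝ) - p ≠ 0 := by linarith
    field_simp
  rw [← h2, h3, h4, zero_add]

lemma mu_set_eval (p : ℝ) (hp0 : 0 < p) (hp1 : p < 1) (m : ℕ) (s : Set ℝ)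
    (hs : MeasurableSet s)
    (hmem : ∀ k : ℕ, (1 - (2:ℝ)⁻¹ ^ k ∈ s) ↔ m ≤ k) :
    Measure.sum (fun ℓ : ℕ =>
        (ENNReal.ofReal ((1 - p) * p ^ ℓ)) • Measure.dirac (1 - (2:ℝ)⁻¹ ^ ℓ)) s
      = ENNReal.ofReal (p ^ m) := by
  rw [Measure.sum_apply _ hs]
  have h : ∀ k : ℕ,
      ((ENNReal.ofReal ((1 - p) * p ^ k)) • Measure.dirac (1 - (2:ℝ)⁻¹ ^ k)) s
        = if m ≤ k then ENNReal.ofReal ((1 - p) * p ^ k) else 0 := by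
    intro k
    rw [Measure.smul_apply, smul_eq_mul, Measure.dirac_apply' _ hs]
    by_cases h : m ≤ k
    · rw [Set.indicator_of_mem ((hmem k).mpr h), if_pos h]
      simp
    · rw [Set.indicator_of_notMem (fun hh => h ((hmem k).mp hh)), if_neg h]
      simp
  simp_rw [h]
  exact tsum_tail_geom p hp0 hp1 m

lemma mu_support (p : ℝ) :
    Measure.sum (fun ℓ : ℕ =>
        (ENNReal.ofReal ((1 - p) * p ^ ℓ)) • Measure.dirac (1 - (2:ℝ)⁻¹ ^ ℓ))
      (Set.range (fun k : ℕ => 1 - (2:ℝ)⁻¹ ^ k))ᶜ = 0 := by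
  have hms : MeasurableSet (Set.range (fun k : ℕ => 1 - (2:ℝ)⁻¹ ^ k))ᶜ :=
    (Set.countable_range _).measurableSet.compl
  rw [Measure.sum_apply _ hms]
  have h : ∀ k : ℕ,
      ((ENNReal.ofReal ((1 - p) * p ^ k)) • Measure.dirac (1 - (2:ℝ)⁻¹ ^ k))
        (Set.range (fun k : ℕ => 1 - (2:ℝ)⁻¹ ^ k))ᶜ = 0 := by
    intro k
    rw [Measure.smul_apply, smul_eq_mul, Measure.dirac_apply' _ hms]
    rw [Set.indicator_of_notMem (by simp [Set.mem_range])]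
    simp
  simp [h]

lemma sum_ge_forces (ℓ j k : ℕ)
    (h : 2 * (1 - (2:ℝ)⁻¹ ^ ℓ) ≤ (1 - (2:ℝ)⁻¹ ^ j) + (1 - (2:ℝ)⁻¹ ^ k)) :
    1 - (2:ℝ)⁻¹ ^ ℓ ≤ 1 - (2:ℝ)⁻¹ ^ j := by
  by_contra hc
  push_neg at hc
  have h2 : ((2:ℝ)⁻¹) ^ ℓ < (2:ℝ)⁻¹ ^ j := by linarith
  have hj : j < ℓ := by
    rw [pow_lt_pow_iff_right_of_lt_one₀ (by norm_num) (by norm_num)] at h2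
    exact h2
  have h3 : ((2:ℝ)⁻¹) ^ ℓ ≤ (2:ℝ)⁻¹ ^ (j + 1) :=
    pow_le_pow_of_le_one (by norm_num) (by norm_num) (by omega)
  have h4 : (0:ℝ) < (2:ℝ)⁻¹ ^ k := pow_pos (by norm_num) k
  have h5 : ((2:ℝ)⁻¹) ^ (j + 1) = (2:ℝ)⁻¹ ^ j / 2 := by
    rw [pow_succ]; ring
  linarith

theorem atomic_example_drifts
    (p r : ℝ) (hp : p ∈ Set.Ioo (0:ℝ) 1) (hr : r ∈ Set.Ioo (0:ℝ) 1)
    (hrp : r < 1 - p ^ 2)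
    {Ω : Type*} [MeasurableSpace Ω] (P : Measure Ω) [IsProbabilityMeasure P]
    (X Y : Ω → ℝ) (hX : Measurable X) (hY : Measurable Y)
    (hXY : IndepFun X Y P)
    (μ : Measure ℝ)
    (hμ : μ = Measure.sum (fun ℓ : ℕ =>
      (ENNReal.ofReal ((1 - p) * p ^ ℓ)) • Measure.dirac (1 - (2:ℝ)⁻¹ ^ ℓ)))
    (hXlaw : Measure.map X P = μ) (hYlaw : Measure.map Y P = μ) :
    ∀ ℓ : ℕ, ∀ a : ℝ, a = 1 - (2:ℝ)⁻¹ ^ ℓ →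
      ((P {ω | X ω > a ∧ Y ω > a ∧ X ω + Y ω ≥ 2 * a}).toReal
          / (P {ω | X ω + Y ω ≥ 2 * a}).toReal - (1 - r) = p ^ 2 - 1 + r ∧
        p ^ 2 - 1 + r < 0) ∧
      ((P {ω | X ω ≥ a ∧ Y ω ≥ a ∧ X ω + Y ω ≥ 2 * a}).toReal
          / (P {ω | X ω + Y ω ≥ 2 * a}).toReal - (1 - r) = r ∧
        0 < r) := by
  obtain ⟨hp0, hp1⟩ := hp
  obtain ⟨hr0, hr1⟩ := hr
  intro ℓ a ha
  have hIci : MeasurableSet {x : ℝ | a ≤ x} := measurableSet_Ici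
  have hIoi : MeasurableSet {x : ℝ | a < x} := measurableSet_Ioi
  have hmemIci : ∀ k : ℕ, (1 - (2:ℝ)⁻¹ ^ k ∈ {x : ℝ | a ≤ x}) ↔ ℓ ≤ k := by
    intro k
    simp only [Set.mem_setOf_eq, ha]
    rw [sub_le_sub_iff_left, ← not_lt,
      pow_lt_pow_iff_right_of_lt_one₀ (by norm_num) (by norm_num), not_lt]
  have hmemIoi : ∀ k : ℕ, (1 - (2:ℝ)⁻¹ ^ k ∈ {x : ℝ | a < x}) ↔ ℓ + 1 ≤ k := by
    intro k
    simp only [Set.mem_setOf_eq, ha]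
    rw [sub_lt_sub_iff_left,
      pow_lt_pow_iff_right_of_lt_one₀ (by norm_num) (by norm_num)]
    omega
  have hPXIci : P (X ⁻¹' {x : ℝ | a ≤ x}) = ENNReal.ofReal (p ^ ℓ) := by
    rw [← Measure.map_apply hX hIci, hXlaw, hμ]
    exact mu_set_eval p hp0 hp1 ℓ _ hIci hmemIci
  have hPYIci : P (Y ⁻¹' {x : ℝ | a ≤ x}) = ENNReal.ofReal (p ^ ℓ) := by
    rw [← Measure.map_apply hY hIci, hYlaw, hμ]
    exact mu_set_eval p hp0 hp1 ℓ _ hIci hmemIci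
  have hPXIoi : P (X ⁻¹' {x : ℝ | a < x}) = ENNReal.ofReal (p ^ (ℓ + 1)) := by
    rw [← Measure.map_apply hX hIoi, hXlaw, hμ]
    exact mu_set_eval p hp0 hp1 (ℓ + 1) _ hIoi hmemIoi
  have hPYIoi : P (Y ⁻¹' {x : ℝ | a < x}) = ENNReal.ofReal (p ^ (ℓ + 1)) := by
    rw [← Measure.map_apply hY hIoi, hYlaw, hμ]
    exact mu_set_eval p hp0 hp1 (ℓ + 1) _ hIoi hmemIoi
  have hrange : MeasurableSet (Set.range (fun k : ℕ => 1 - (2:ℝ)⁻¹ ^ k))ᶜ :=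
    (Set.countable_range _).measurableSet.compl
  have hXae : ∀ᵐ ω ∂P, ∃ k : ℕ, X ω = 1 - (2:ℝ)⁻¹ ^ k := by
    rw [ae_iff]
    have hset : {ω | ¬ ∃ k : ℕ, X ω = 1 - (2:ℝ)⁻¹ ^ k}
        = X ⁻¹' (Set.range (fun k : ℕ => 1 - (2:ℝ)⁻¹ ^ k))ᶜ := by
      ext ω; simp [Set.mem_range, eq_comm]
    rw [hset, ← Measure.map_apply hX hrange, hXlaw, hμ]
    exact mu_support p
  have hYae : ∀ᵐ ω ∂P, ∃ k : ℕ, Y ω = 1 - (2:ℝ)⁻¹ ^ k := by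
    rw [ae_iff]
    have hset : {ω | ¬ ∃ k : ℕ, Y ω = 1 - (2:ℝ)⁻¹ ^ k}
        = Y ⁻¹' (Set.range (fun k : ℕ => 1 - (2:ℝ)⁻¹ ^ k))ᶜ := by
      ext ω; simp [Set.mem_range, eq_comm]
    rw [hset, ← Measure.map_apply hY hrange, hYlaw, hμ]
    exact mu_support p
  have hden : P {ω | X ω + Y ω ≥ 2 * a}
      = ENNReal.ofReal (p ^ ℓ) * ENNReal.ofReal (p ^ ℓ) := by
    have hae : ({ω | X ω + Y ω ≥ 2 * a} : Set Ω)
        =ᵐ[P] ((X ⁻¹' {x : ℝ | a ≤ x} ∩ Y ⁻¹' {x : ℝ | a ≤ x} : Set Ω)) := by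
      rw [Filter.eventuallyEq_set]
      filter_upwards [hXae, hYae] with ω hx hy
      obtain ⟨j, hj⟩ := hx
      obtain ⟨k, hk⟩ := hy
      simp only [Set.mem_setOf_eq, Set.mem_inter_iff, Set.mem_preimage, ge_iff_le]
      constructor
      · intro h
        rw [hj, hk, ha] at h ⊢
        refine ⟨sum_ge_forces ℓ j k h, sum_ge_forces ℓ k j (by linarith)⟩
      · rintro ⟨h1, h2⟩
        linarith
    rw [measure_congr hae, hXY.measure_inter_preimage_eq_mul _ _ hIci hIci,
      hPXIci, hPYIci]
  have hnum1 : P {ω | X ω > a ∧ Y ω > a ∧ X ω + Y ω ≥ 2 * a}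
      = ENNReal.ofReal (p ^ (ℓ + 1)) * ENNReal.ofReal (p ^ (ℓ + 1)) := by
    have hset : {ω | X ω > a ∧ Y ω > a ∧ X ω + Y ω ≥ 2 * a}
        = X ⁻¹' {x : ℝ | a < x} ∩ Y ⁻¹' {x : ℝ | a < x} := by
      ext ω
      simp only [Set.mem_setOf_eq, Set.mem_inter_iff, Set.mem_preimage]
      constructor
      · rintro ⟨h1, h2, _⟩; exact ⟨h1, h2⟩
      · rintro ⟨h1, h2⟩; exact ⟨h1, h2, by simp only [ge_iff_le]; linarith⟩
    rw [hset, hXY.measure_inter_preimage_eq_mul _ _ hIoi hIoi, hPXIoi, hPYIoi]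
  have hnum2 : P {ω | X ω ≥ a ∧ Y ω ≥ a ∧ X ω + Y ω ≥ 2 * a}
      = ENNReal.ofReal (p ^ ℓ) * ENNReal.ofReal (p ^ ℓ) := by
    have hset : {ω | X ω ≥ a ∧ Y ω ≥ a ∧ X ω + Y ω ≥ 2 * a}
        = X ⁻¹' {x : ℝ | a ≤ x} ∩ Y ⁻¹' {x : ℝ | a ≤ x} := by
      ext ω
      simp only [Set.mem_setOf_eq, Set.mem_inter_iff, Set.mem_preimage, ge_iff_le]
      constructor
      · rintro ⟨h1, h2, _⟩; exact ⟨h1, h2⟩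
      · rintro ⟨h1, h2⟩; exact ⟨h1, h2, by linarith⟩
    rw [hset, hXY.measure_inter_preimage_eq_mul _ _ hIci hIci, hPXIci, hPYIci]
  have hpl : (0:ℝ) < p ^ ℓ := pow_pos hp0 ℓ
  have htoreal : ∀ m : ℕ, (ENNReal.ofReal (p ^ m) * ENNReal.ofReal (p ^ m)).toReal
      = p ^ m * p ^ m := by
    intro m
    rw [← ENNReal.ofReal_mul (pow_nonneg hp0.le m),
      ENNReal.toReal_ofReal (by positivity)]
  have hd : (P {ω | X ω + Y ω ≥ 2 * a}).toReal = p ^ ℓ * p ^ ℓ := by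
    rw [hden, htoreal]
  refine ⟨⟨?_, by nlinarith⟩, ?_, hr0⟩
  · rw [hnum1, htoreal, hd]
    have he : p ^ (ℓ + 1) * p ^ (ℓ + 1) = (p ^ ℓ * p ^ ℓ) * p ^ 2 := by ring
    have hne : p ^ ℓ * p ^ ℓ ≠ 0 := by positivity
    rw [he, mul_comm (p ^ ℓ * p ^ ℓ) (p ^ 2), mul_div_assoc, div_self hne, mul_one]
    ring
  · rw [hnum2, htoreal, hd, div_self (by positivity)]
    ring
end

section
/- Define ρ(m) = μ((m,∞))²/(μ*μ)([2m,∞)) − (1−r) and ρ⁺(m) = lim_{q→m⁻} ρ(q). Then ρ(x) ≤ ρ⁺(x) for all x, with strict inequality if and only if μ({x}) > 0. -/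
/-!
As `q ↑ x`, the sets `(q, ∞)` decrease to `[x, ∞)` and the half-planes `{2q ≤ s + t}` decrease to
`{2x ≤ s + t}`, so continuity of measures from above gives
`ρ⁺(x) = F(μ([x, ∞)))` and `ρ(x) = F(μ((x, ∞)))` for `F y = y² / (μ ⊗ μ){2x ≤ s + t} - (1 - r)`,
which is strictly increasing on `[0, ∞)`. Since `μ([x, ∞)) = μ((x, ∞)) + μ{x}`, the two values differ
exactly when `x` is an atom.
-/

open MeasureTheory Set Filter Topology

section LeftLimits

variable {α ι : Type*} [MeasurableSpace α] {μ : Measure α}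
  [LinearOrder ι] [TopologicalSpace ι] [OrderTopology ι] [FirstCountableTopology ι]

theorem tendsto_measure_biInter_lt {s : ι → Set α} {a : ι}
    (hs : ∀ r < a, NullMeasurableSet (s r) μ) (hm : ∀ i j, j < a → i ≤ j → s j ⊆ s i)
    (hf : ∃ r < a, μ (s r) ≠ ⊤) :
    Tendsto (μ ∘ s) (𝓝[<] a) (𝓝 (μ (⋂ r < a, s r))) :=
  tendsto_measure_biInter_gt (ι := ιᵒᵈ) hs (fun i j hi hij => hm j i hi hij) hf

variable [MeasurableSpace ι] [OpensMeasurableSpace ι] [NoMinOrder ι] [IsFiniteMeasure μ]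
  {f : α → ι}

theorem tendsto_measure_setOf_lt_nhdsLT (hf : Measurable f) (x : ι) :
    Tendsto (fun t => μ {a | t < f a}) (𝓝[<] x) (𝓝 (μ {a | x ≤ f a})) := by
  have hinter : ⋂ t < x, {a | t < f a} = {a | x ≤ f a} := by
    ext a
    simpa only [mem_iInter, mem_ofPred_eq] using forall_lt_iff_le
  obtain ⟨t, ht⟩ := exists_lt x
  rw [← hinter]
  exact tendsto_measure_biInter_lt (fun t _ => (hf measurableSet_Ioi).nullMeasurableSet)
    (fun i j _ hij a ha => lt_of_le_of_lt hij ha) ⟨t, ht, measure_ne_top _ _⟩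

theorem tendsto_measure_setOf_le_nhdsLT [DenselyOrdered ι] (hf : Measurable f) (x : ι) :
    Tendsto (fun t => μ {a | t ≤ f a}) (𝓝[<] x) (𝓝 (μ {a | x ≤ f a})) := by
  have hinter : ⋂ t < x, {a | t ≤ f a} = {a | x ≤ f a} := by
    ext a
    simpa only [mem_iInter, mem_ofPred_eq] using forall_lt_imp_le_iff_le_of_dense
  obtain ⟨t, ht⟩ := exists_lt x
  rw [← hinter]
  exact tendsto_measure_biInter_lt (fun t _ => (hf measurableSet_Ici).nullMeasurableSet)
    (fun i j _ hij a ha => hij.trans ha) ⟨t, ht, measure_ne_top _ _⟩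

end LeftLimits

theorem measure_Ioi_lt_measure_Ici_iff {ι : Type*} [PartialOrder ι] [MeasurableSpace ι]
    [MeasurableSingletonClass ι] {μ : Measure ι} {x : ι} (h : μ (Ioi x) ≠ ⊤) :
    μ (Ioi x) < μ (Ici x) ↔ 0 < μ {x} := by
  rw [← Ioi_union_left, measure_union (disjoint_singleton_right.2 self_notMem_Ioi)
    (measurableSet_singleton x)]
  simpa using ENNReal.add_lt_add_iff_left h (b := 0) (c := μ {x})

theorem tendsto_const_mul_nhdsLT {c : ℝ} (hc : 0 < c) (x : ℝ) :
    Tendsto (fun m => c * m) (𝓝[<] x) (𝓝[<] (c * x)) :=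
  (continuous_const_mul c).continuousWithinAt.tendsto_nhdsWithin
    fun m (hm : m < x) => show c * m < c * x from mul_lt_mul_of_pos_left hm hc

theorem rho_le_rhoPlus_iff_atom_general
    (μ : Measure ℝ) [IsProbabilityMeasure μ] (r : ℝ)
    (ρ : ℝ → ℝ)
    (hρ : ρ = fun m : ℝ =>
      (μ (Ioi m)).toReal ^ 2
          / ((μ.prod μ) {q : ℝ × ℝ | 2 * m ≤ q.1 + q.2}).toReal
        - (1 - r))
    (x : ℝ)
    (hden : (μ.prod μ) {q : ℝ × ℝ | 2 * x ≤ q.1 + q.2} ≠ 0)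
    (L : ℝ) (hlim : Tendsto ρ (nhdsWithin x (Iio x)) (nhds L)) :
    ρ x ≤ L ∧ (ρ x < L ↔ 0 < μ {x}) := by
  set D := ((μ.prod μ) {q : ℝ × ℝ | 2 * x ≤ q.1 + q.2}).toReal
  set F : ℝ → ℝ := fun t => t ^ 2 / D - (1 - r)
  have hD : 0 < D := ENNReal.toReal_pos hden (measure_ne_top _ _)
  have hF : StrictMonoOn F (Ici 0) := fun a ha b _ hab => by
    simp only [F]
    gcongr
  have hnum : Tendsto (fun m => (μ (Ioi m)).toReal) (𝓝[<] x) (𝓝 (μ (Ici x)).toReal) :=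
    (ENNReal.tendsto_toReal (measure_ne_top _ _)).comp
      (tendsto_measure_setOf_lt_nhdsLT measurable_id x)
  have hdenom : Tendsto (fun m => ((μ.prod μ) {q : ℝ × ℝ | 2 * m ≤ q.1 + q.2}).toReal)
      (𝓝[<] x) (𝓝 D) :=
    (ENNReal.tendsto_toReal (measure_ne_top _ _)).comp
      ((tendsto_measure_setOf_le_nhdsLT measurable_add (2 * x)).comp
        (tendsto_const_mul_nhdsLT two_pos x))
  have hL : L = F (μ (Ici x)).toReal := by
    refine tendsto_nhds_unique hlim ?_
    rw [hρ]
    exact ((hnum.pow 2).div hdenom hD.ne').sub_const _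
  have hρx : ρ x = F (μ (Ioi x)).toReal := by rw [hρ]
  have hle : (μ (Ioi x)).toReal ≤ (μ (Ici x)).toReal :=
    ENNReal.toReal_mono (measure_ne_top _ _) (measure_mono Ioi_subset_Ici_self)
  rw [hρx, hL, hF.lt_iff_lt ENNReal.toReal_nonneg ENNReal.toReal_nonneg,
    ENNReal.toReal_lt_toReal (measure_ne_top _ _) (measure_ne_top _ _),
    measure_Ioi_lt_measure_Ici_iff (measure_ne_top _ _)]
  exact ⟨hF.monotoneOn ENNReal.toReal_nonneg ENNReal.toReal_nonneg hle, Iff.rfl⟩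

theorem rho_le_rhoPlus_iff_atom
    (μ : Measure ℝ) [IsProbabilityMeasure μ] (r : ℝ) (hr : r ∈ Ioo (0:ℝ) 1)
    (ρ : ℝ → ℝ)
    (hρ : ρ = fun m : ℝ =>
      (μ (Ioi m)).toReal ^ 2
          / ((μ.prod μ) {q : ℝ × ℝ | 2 * m ≤ q.1 + q.2}).toReal
        - (1 - r))
    (x : ℝ)
    (hden : (μ.prod μ) {q : ℝ × ℝ | 2 * x ≤ q.1 + q.2} ≠ 0)
    (L : ℝ) (hlim : Tendsto ρ (nhdsWithin x (Iio x)) (nhds L)) :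
    ρ x ≤ L ∧ (ρ x < L ↔ 0 < μ {x}) :=
  rho_le_rhoPlus_iff_atom_general μ r ρ hρ x hden L hlim
end

section
/- Let (X_j)_{j≥0} be a sequence of reals with X_0 ≥ log n₀ and X_{j+1} ≥ (3/2) X_j − j·log 2 + log δ for all j ≥ 0, where δ ∈ (0,1) is fixed. Then for any Q > 0 there exists n₀ (depending only on Q and δ) such that X_j ≥ Q·(1.1)^j for all j ≥ 1. -/
theorem recursion_superexponential_growth
    (δ : ℝ) (hδ : δ ∈ Set.Ioo (0:ℝ) 1) (Q : ℝ) (hQ : 0 < Q) :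
    ∃ n₀ : ℕ, ∀ X : ℕ → ℝ,
      X 0 ≥ Real.log n₀ →
      (∀ j : ℕ, X (j + 1) ≥ (3 / 2) * X j - j * Real.log 2 + Real.log δ) →
      ∀ j : ℕ, 1 ≤ j → X j ≥ Q * (1.1 : ℝ) ^ j := by
  obtain ⟨hδ0, hδ1⟩ := hδ
  set L : ℝ := Real.log δ⁻¹ with hL
  have hLpos : 0 ≤ L := Real.log_nonneg (by
    rw [le_inv_comm₀] <;> simp [hδ0, hδ1.le])
  have hlogδ : Real.log δ = -L := by
    rw [hL, Real.log_inv]; ring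
  have hlog2 : (0:ℝ) < Real.log 2 := Real.log_pos (by norm_num)
  have hlog2le : Real.log 2 ≤ 1 := by
    calc Real.log 2 ≤ 2 - 1 := Real.log_le_sub_one_of_pos (by norm_num)
    _ = 1 := by norm_num
  set C : ℝ := max Q (25 * Real.log 2 + 2.5 * L) with hC
  have hCQ : Q ≤ C := le_max_left _ _
  have hC2 : 25 * Real.log 2 + 2.5 * L ≤ C := le_max_right _ _
  have hCpos : 0 < C := lt_of_lt_of_le hQ hCQ
  refine ⟨⌈Real.exp (C + L)⌉₊, fun X hX0 hrec => ?_⟩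
  have hn : Real.log (⌈Real.exp (C + L)⌉₊ : ℝ) ≥ C + L := by
    calc C + L = Real.log (Real.exp (C + L)) := (Real.log_exp _).symm
    _ ≤ Real.log (⌈Real.exp (C + L)⌉₊ : ℝ) :=
        Real.log_le_log (Real.exp_pos _) (Nat.le_ceil _)
  have key : ∀ j : ℕ, 1 ≤ j → X j ≥ C * (1.1 : ℝ) ^ j := by
    intro j hj
    induction j, hj using Nat.le_induction with
    | base =>
      have h1 := hrec 0
      simp only [Nat.cast_zero, zero_mul, hlogδ] at h1
      have : X 0 ≥ C + L := le_trans hn hX0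
      calc C * (1.1:ℝ) ^ 1 = 1.1 * C := by ring
      _ ≤ (3/2) * (C + L) - 0 + -L := by nlinarith
      _ ≤ (3/2) * X 0 - 0 + -L := by nlinarith
      _ ≤ X 1 := h1
    | succ j hj ih =>
      have h1 := hrec j
      rw [hlogδ] at h1
      have hpow : (1:ℝ) + j * 0.1 ≤ (1.1:ℝ) ^ j := by
        have := one_add_mul_le_pow (a := (0.1:ℝ)) (by norm_num) j
        linarith [this]
      have hpowpos : (0:ℝ) < (1.1:ℝ) ^ j := by positivity
      have hjn : (0:ℝ) ≤ (j:ℝ) := Nat.cast_nonneg _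
      -- need: 0.4 * C * 1.1^j ≥ j * log 2 + L
      have hkey : (j:ℝ) * Real.log 2 + L ≤ 0.4 * C * (1.1:ℝ)^j := by
        have h2 : 0.4 * C * ((1:ℝ) + j * 0.1) ≤ 0.4 * C * (1.1:ℝ)^j :=
          mul_le_mul_of_nonneg_left hpow (by positivity)
        nlinarith [mul_le_mul_of_nonneg_left hlog2le hjn]
      calc C * (1.1:ℝ) ^ (j+1) = 1.1 * (C * (1.1:ℝ)^j) := by ring
      _ ≤ (3/2) * (C * (1.1:ℝ)^j) - j * Real.log 2 + -L := by nlinarith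
      _ ≤ (3/2) * X j - j * Real.log 2 + -L := by nlinarith
      _ ≤ X (j+1) := h1
  intro j hj
  calc Q * (1.1:ℝ)^j ≤ C * (1.1:ℝ)^j := by
        have : (0:ℝ) < (1.1:ℝ)^j := by positivity
        nlinarith
  _ ≤ X j := key j hj
end
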